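/- Let A=(S,R) be a finite argumentation network and let h be an assignment under which some atom has value (⊥,⊤). Then t ⊨_h Θ¹_A, where Θ¹_A is the theory Δ_A with every occurrence of the constant n replaced by the formula ⋀_{x∈S}(x ∨ ¬x), if and only if λ_h is a complete extension of A (necessarily a non-stable one, since some atom is labelled und). -/

import Mathlib

/-- The three Caminada labels. -/
inductive Label where
  | in_ : Label
  | out : Label
  | und : Label
deriving DecidableEq

/-- Propositional intuitionistic formulas over atoms `α`, with the
distinguished constant `nconst` (the paper's `n`). -/
inductive Form (α : Type) where
  | atom : α → Form α
  | nconst : Form α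
  | top : Form α
  | bot : Form α
  | and : Form α → Form α → Form α
  | or : Form α → Form α → Form α
  | imp : Form α → Form α → Form α
  | neg : Form α → Form α

/-- Forcing in the two-world Kripke model: world `false` is `t`, world `true`
is `s`, with `t < s` (i.e. the Bool order). `h` assigns to each atom its pair
of truth values (at `t`, at `s`). The constant `n` has value `(⊥,⊤)`. -/
def force {α : Type} (h : α → Bool × Bool) : Bool → Form α → Prop
  | w, .atom x => (if w then (h x).2 else (h x).1) = true
  | w, .nconst => w = true
  | _, .top => True
  | _, .bot => False
  | w, .and A B => force h w A ∧ force h w B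
  | w, .or A B => force h w A ∨ force h w B
  | w, .imp A B => ∀ v : Bool, w ≤ v → force h v A → force h v B
  | w, .neg A => ∀ v : Bool, w ≤ v → ¬ force h v A

/-- An assignment is legitimate when no atom gets the forbidden value `(⊤,⊥)`. -/
def Persistent {α : Type} (h : α → Bool × Bool) : Prop :=
  ∀ x, (h x).1 = true → (h x).2 = true

def bigAnd {α : Type} : List (Form α) → Form α
  | [] => .top
  | f :: fs => .and f (bigAnd fs)

def bigOr {α : Type} : List (Form α) → Form α
  | [] => .bot
  | f :: fs => .or f (bigOr fs)

/-- The list of attackers of `x` in the network `(α, R)`. -/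
noncomputable def attackers {α : Type} [Fintype α] (R : α → α → Prop) [DecidableRel R] (x : α) : List α :=
  (Finset.univ.filter (fun y => R y x)).toList

/-- (a1)  `x → (n ∨ ⋀_{yRx} ¬y)` -/
noncomputable def fa1 {α : Type} [Fintype α] (R : α → α → Prop) [DecidableRel R] (x : α) : Form α :=
  .imp (.atom x) (.or .nconst (bigAnd ((attackers R x).map (fun y => .neg (.atom y)))))

/-- (a2)  `(⋀_{yRx} ¬y) → (n ∨ x)` -/
noncomputable def fa2 {α : Type} [Fintype α] (R : α → α → Prop) [DecidableRel R] (x : α) : Form α :=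
  .imp (bigAnd ((attackers R x).map (fun y => .neg (.atom y)))) (.or .nconst (.atom x))

/-- (b1)  `¬x → (n ∨ ⋁_{yRx} y)` -/
noncomputable def fb1 {α : Type} [Fintype α] (R : α → α → Prop) [DecidableRel R] (x : α) : Form α :=
  .imp (.neg (.atom x)) (.or .nconst (bigOr ((attackers R x).map (fun y => .atom y))))

/-- (b2)  `(⋁_{yRx} y) → (¬x ∨ n)` -/
noncomputable def fb2 {α : Type} [Fintype α] (R : α → α → Prop) [DecidableRel R] (x : α) : Form α :=
  .imp (bigOr ((attackers R x).map (fun y => .atom y))) (.or (.neg (.atom x)) .nconst)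

/-- `h` is a model of the theory `Δ_A`: every formula of `Δ_A` holds at `t`. -/
def ModelsDelta {α : Type} [Fintype α] (h : α → Bool × Bool)
    (R : α → α → Prop) [DecidableRel R] : Prop :=
  ∀ x, force h false (fa1 R x) ∧ force h false (fa2 R x) ∧
    force h false (fb1 R x) ∧ force h false (fb2 R x)

/-- Caminada labelling / complete extension of the network `(α, R)`. -/
def IsCompleteExt {α : Type} (R : α → α → Prop) (l : α → Label) : Prop :=
  (∀ x, l x = .in_ ↔ ∀ y, R y x → l y = .out) ∧
  (∀ x, l x = .out ↔ ∃ y, R y x ∧ l y = .in_) ∧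
  (∀ x, l x = .und ↔ ((∀ y, R y x → l y ≠ .in_) ∧ ∃ y, R y x ∧ l y = .und))

/-- The labelling `λ_h` induced by an assignment `h`. -/
def lamOf {α : Type} (h : α → Bool × Bool) (x : α) : Label :=
  if h x = (true, true) then .in_ else if h x = (false, false) then .out else .und

/-- The assignment `h_λ` induced by a labelling `λ`. -/
def assignOf {α : Type} (l : α → Label) (x : α) : Bool × Bool :=
  match l x with
  | .in_ => (true, true)
  | .out => (false, false)
  | .und => (false, true)

/-- Substitute the formula `N` for every occurrence of the constant `n`. -/
def subN {α : Type} (N : Form α) : Form α → Form α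
  | .atom x => .atom x
  | .nconst => N
  | .top => .top
  | .bot => .bot
  | .and A B => .and (subN N A) (subN N B)
  | .or A B => .or (subN N A) (subN N B)
  | .imp A B => .imp (subN N A) (subN N B)
  | .neg A => .neg (subN N A)

/-- The formula `N = ⋀_{x∈S} (x ∨ ¬x)`. -/
noncomputable def Nform (α : Type) [Fintype α] : Form α :=
  bigAnd ((Finset.univ : Finset α).toList.map (fun x => .or (.atom x) (.neg (.atom x))))

/-! Under `hu` the formula `⋀_{x∈S}(x ∨ ¬x)` fails at `t` and holds at `s`, exactly like the
constant `n`, so `Θ¹_A` is forced wherever `Δ_A` is. With `n` true at `s` and false at `t`, each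
formula of `Δ_A` forced at `t` says one direction of (C1) or (C2) for `λ_h`, and (C3) is implied
by (C1) and (C2) because there are only three labels. -/

lemma isCompleteExt_iff {α : Type} {R : α → α → Prop} {l : α → Label} :
    IsCompleteExt R l ↔ ∀ x, (l x = .in_ ↔ ∀ y, R y x → l y = .out) ∧
      (l x = .out ↔ ∃ y, R y x ∧ l y = .in_) := by
  refine ⟨fun ⟨hin, hout, _⟩ x => ⟨hin x, hout x⟩, fun H => ⟨fun x => (H x).1, fun x => (H x).2, ?_⟩⟩
  intro x
  have hund : ∀ y, l y = .und ↔ l y ≠ .in_ ∧ l y ≠ .out := by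
    intro y; cases l y <;> simp
  rw [hund, Ne, Ne, (H x).1, (H x).2]
  constructor
  · rintro ⟨hall, hex⟩
    push Not at hall hex
    obtain ⟨y, hy, hyo⟩ := hall
    exact ⟨hex, y, hy, (hund y).2 ⟨hex y hy, hyo⟩⟩
  · rintro ⟨hin, y, hy, hyu⟩
    exact ⟨fun hall => by simp [hall y hy] at hyu, fun ⟨z, hz, hzin⟩ => hin z hz hzin⟩

section Forcing

variable {α : Type} (h : α → Bool × Bool)

lemma force_false_imp_nconst_or (A B : Form α) :
    force h false (.imp A (.or .nconst B)) ↔ (force h false A → force h false B) := by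
  simp [force]

lemma force_false_imp_or_nconst (A B : Form α) :
    force h false (.imp A (.or B .nconst)) ↔ (force h false A → force h false B) := by
  simp [force]

lemma force_bigAnd (w : Bool) (L : List (Form α)) :
    force h w (bigAnd L) ↔ ∀ f ∈ L, force h w f := by
  induction L with
  | nil => simp [bigAnd, force]
  | cons f fs ih => simp [bigAnd, force, ih]

lemma force_bigOr (w : Bool) (L : List (Form α)) :
    force h w (bigOr L) ↔ ∃ f ∈ L, force h w f := by
  induction L with
  | nil => simp [bigOr, force]
  | cons f fs ih => simp [bigOr, force, ih]

lemma force_subN {N : Form α} (hN : ∀ w, force h w N ↔ w = true) (A : Form α) (w : Bool) :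
    force h w (subN N A) ↔ force h w A := by
  induction A generalizing w with
  | nconst => exact hN w
  | atom | top | bot => rfl
  | and A B ihA ihB => simp only [subN, force, ihA, ihB]
  | or A B ihA ihB => simp only [subN, force, ihA, ihB]
  | imp A B ihA ihB => simp only [subN, force, ihA, ihB]
  | neg A ihA => simp only [subN, force, ihA]

lemma force_Nform [Fintype α] (hu : ∃ x, h x = (false, true)) (w : Bool) :
    force h w (Nform α) ↔ w = true := by
  obtain ⟨x, hx⟩ := hu
  cases w
  · refine iff_of_false (fun H => ?_) Bool.false_ne_true
    have hxx := (force_bigAnd h false _).1 H _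
      (List.mem_map_of_mem (Finset.mem_toList.2 (Finset.mem_univ x)))
    simp [force, hx] at hxx
  · simp [Nform, force_bigAnd, force, Bool.forall_bool]

end Forcing

section Labelling

variable {α : Type} (h : α → Bool × Bool)

lemma force_false_atom (hp : Persistent h) (x : α) :
    force h false (.atom x) ↔ lamOf h x = .in_ := by
  have := hp x
  rcases hx : h x with ⟨_ | _, _ | _⟩ <;> simp_all [force, lamOf]

lemma force_false_neg_atom (x : α) :
    force h false (.neg (.atom x)) ↔ lamOf h x = .out := by
  rcases hx : h x with ⟨_ | _, _ | _⟩ <;> simp [force, lamOf, hx, Bool.forall_bool]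

variable [Fintype α] (R : α → α → Prop) [DecidableRel R]

lemma mem_attackers {x y : α} : y ∈ attackers R x ↔ R y x := by
  simp [attackers]

lemma force_false_bigAnd_neg_attackers (x : α) :
    force h false (bigAnd ((attackers R x).map fun y => .neg (.atom y))) ↔
      ∀ y, R y x → lamOf h y = .out := by
  simp [force_bigAnd, mem_attackers, force_false_neg_atom]

lemma force_false_bigOr_attackers (hp : Persistent h) (x : α) :
    force h false (bigOr ((attackers R x).map .atom)) ↔
      ∃ y, R y x ∧ lamOf h y = .in_ := by
  simp [force_bigOr, mem_attackers, force_false_atom h hp]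

theorem modelsDelta_iff_isCompleteExt (hp : Persistent h) :
    ModelsDelta h R ↔ IsCompleteExt R (lamOf h) := by
  simp only [ModelsDelta, isCompleteExt_iff, fa1, fa2, fb1, fb2, force_false_imp_nconst_or,
    force_false_imp_or_nconst, force_false_bigAnd_neg_attackers,
    force_false_bigOr_attackers h R hp, force_false_atom h hp, force_false_neg_atom,
    iff_def, and_assoc]

end Labelling

theorem stmt9_general {α : Type} [Fintype α] (R : α → α → Prop) [DecidableRel R]
    (h : α → Bool × Bool) (hp : Persistent h) (hu : ∃ x, h x = (false, true)) :
    ((∀ x, force h false (subN (Nform α) (fa1 R x)) ∧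
        force h false (subN (Nform α) (fa2 R x)) ∧
        force h false (subN (Nform α) (fb1 R x)) ∧
        force h false (subN (Nform α) (fb2 R x))) ↔
      IsCompleteExt R (lamOf h)) ∧
    (∃ x, lamOf h x = .und) := by
  simp only [force_subN h (force_Nform h hu)]
  refine ⟨modelsDelta_iff_isCompleteExt h R hp, ?_⟩
  obtain ⟨x, hx⟩ := hu
  exact ⟨x, by simp [lamOf, hx]⟩

/-- If some atom has value `(⊥,⊤)` under `h`, then `t ⊨_h Θ¹_A` (which is `Δ_A`
with `n` replaced by `⋀_{x∈S}(x ∨ ¬x)`) iff `λ_h` is a complete extension of `A`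
(and it is non-stable: some atom is labelled `und`). -/
theorem stmt9 {α : Type} [Fintype α] [Nonempty α] (R : α → α → Prop) [DecidableRel R]
    (h : α → Bool × Bool) (hp : Persistent h) (hu : ∃ x, h x = (false, true)) :
    ((∀ x, force h false (subN (Nform α) (fa1 R x)) ∧
        force h false (subN (Nform α) (fa2 R x)) ∧
        force h false (subN (Nform α) (fb1 R x)) ∧
        force h false (subN (Nform α) (fb2 R x))) ↔
      IsCompleteExt R (lamOf h)) ∧
    (∃ x, lamOf h x = .und) :=
  stmt9_general R h hp hu
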